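/- Let 1 ≤ p < ∞, let d ≥ 1, set φ(z) = z_1 + z_2 + ⋯ + z_d on 𝕋^d, and define ψ(z) = d · ‖φ‖_{L^p(𝕋^d)}^{-p} · |φ(z)|^{p-2} φ(z) (defined μ_d-almost everywhere, since φ ≠ 0 almost everywhere). Then ψ ∈ L^q(𝕋^d), where q = p/(p-1) is the conjugate exponent of p (q = ∞ when p = 1), and for every multi-index α ∈ ℕ₀^d one has ∫_{𝕋^d} ψ(z) · conj(z_1^{α_1} ⋯ z_d^{α_d}) dμ_d(z) = 1 if α is a standard unit vector e_j for some 1 ≤ j ≤ d, and = 0 for every other α ∈ ℕ₀^d. In other words, the Riesz projection of ψ equals φ. -/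

import Mathlib

open MeasureTheory Complex Filter
open scoped ENNReal NNReal

noncomputable instance : MeasurableSpace Circle := borel Circle
instance : BorelSpace Circle := ⟨rfl⟩

/-- The normalized Lebesgue arc measure on the unit circle, i.e. its Haar probability
measure. -/
noncomputable def muCircle : Measure Circle := Measure.haarMeasure ⊤

instance : IsProbabilityMeasure muCircle :=
  ⟨by simpa [muCircle] using
    Measure.haarMeasure_self (K₀ := (⊤ : TopologicalSpace.PositiveCompacts Circle))⟩

/-- The probability measure `μ_d` on `𝕋^d`: the product of normalized Lebesgue arc
measures. -/
noncomputable def muD (d : ℕ) : Measure (Fin d → Circle) := Measure.pi fun _ => muCircle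

/-- `φ(z) = z_1 + ⋯ + z_d` on `𝕋^d`. -/
noncomputable def phiD (d : ℕ) : (Fin d → Circle) → ℂ := fun z => ∑ j, (z j : ℂ)

/-- The `L^p(𝕋^d)` norm of `φ`. -/
noncomputable def phiNorm (p : ℝ) (d : ℕ) : ℝ :=
  (∫ z : Fin d → Circle, ‖phiD d z‖ ^ p ∂muD d) ^ (1 / p)

/-- The extremal function `ψ(z) = d ‖φ‖_p^{-p} |φ(z)|^{p-2} φ(z)`. -/
noncomputable def psiFn (p : ℝ) (d : ℕ) : (Fin d → Circle) → ℂ := fun z =>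
  ((d * (phiNorm p d) ^ (-p) : ℝ) : ℂ) * ((‖phiD d z‖ ^ (p - 2) : ℝ) : ℂ) * phiD d z

/-!
For `p ≥ 1` the function `ψ` is bounded by `d ‖φ‖_p^{-p} d^{p-1}`, so it lies in every `L^q`.
Rotating all coordinates by a common `w ∈ 𝕋` multiplies `ψ` by `w` and `z^α` by `w^{|α|}`;
as `μ_d` is rotation invariant, the coefficient at `α` equals `w^{1-|α|}` times itself, hence
vanishes unless `|α| = 1`. By permutation symmetry the coefficients at the `e_j` all agree, and
they sum to `∫ ψ · conj φ = d ‖φ‖_p^{-p} ∫ |φ|^p = d`, so each of them is `1`.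
-/

open ComplexConjugate

instance : Measure.IsMulLeftInvariant muCircle := by unfold muCircle; infer_instance
instance (d : ℕ) : IsProbabilityMeasure (muD d) := by unfold muD; infer_instance
instance (d : ℕ) : Measure.IsMulLeftInvariant (muD d) := by unfold muD; infer_instance

lemma exists_eq_pi_single_of_sum_eq_one {ι : Type*} [Fintype ι] [DecidableEq ι] {α : ι → ℕ}
    (h : ∑ i, α i = 1) : ∃ i, α = Pi.single i 1 := by
  obtain ⟨i, hi⟩ := (Finsupp.sum_eq_one_iff (Finsupp.equivFunOnFinite.symm α)).mp
    (by rwa [Finsupp.sum_fintype _ _ fun _ => rfl])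
  exact ⟨i, by simpa [← Finsupp.single_eq_pi_single] using congrArg DFunLike.coe hi⟩

lemma eq_zero_of_forall_circle_zpow_mul_eq {c : ℂ} {k : ℤ} (hk : k ≠ 0)
    (h : ∀ w : Circle, ((w ^ k : Circle) : ℂ) * c = c) : c = 0 := by
  have hw : ((Circle.exp (Real.pi / k) ^ k : Circle) : ℂ) = -1 := by
    rw [← Circle.exp_intCast_mul, mul_div_cancel₀ _ (Int.cast_ne_zero.mpr hk), Circle.coe_exp,
      Complex.exp_pi_mul_I]
  have := h (Circle.exp (Real.pi / k))
  rw [hw] at this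
  linear_combination -this / 2

section TorusFourier

variable {d : ℕ}

def torusMonomial (α : Fin d → ℕ) (z : Fin d → Circle) : ℂ := ∏ j, (z j : ℂ) ^ α j

noncomputable def torusFourierCoeff (f : (Fin d → Circle) → ℂ) (α : Fin d → ℕ) : ℂ :=
  ∫ z, f z * conj (torusMonomial α z) ∂muD d

lemma norm_torusMonomial (α : Fin d → ℕ) (z : Fin d → Circle) : ‖torusMonomial α z‖ = 1 := by
  simp [torusMonomial, Circle.norm_coe]

lemma measurable_torusMonomial (α : Fin d → ℕ) : Measurable (torusMonomial α) := by
  unfold torusMonomial; fun_prop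

lemma torusMonomial_const_mul (α : Fin d → ℕ) (w : Circle) (z : Fin d → Circle) :
    torusMonomial α (fun j => w * z j) = (w : ℂ) ^ (∑ j, α j) * torusMonomial α z := by
  simp only [torusMonomial, Circle.coe_mul, mul_pow, Finset.prod_mul_distrib,
    Finset.prod_pow_eq_pow_sum]

lemma torusMonomial_single (j : Fin d) (z : Fin d → Circle) :
    torusMonomial (Pi.single j 1) z = z j := by
  rw [torusMonomial, Fintype.prod_eq_single j fun k hk => by rw [Pi.single_eq_of_ne hk, pow_zero],
    Pi.single_eq_same, pow_one]

lemma MeasureTheory.Integrable.mul_conj_torusMonomial {f : (Fin d → Circle) → ℂ}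
    (hf : Integrable f (muD d)) (α : Fin d → ℕ) :
    Integrable (fun z => f z * conj (torusMonomial α z)) (muD d) :=
  hf.mul_bdd (c := 1) (Complex.continuous_conj.measurable.comp
    (measurable_torusMonomial α)).aestronglyMeasurable
    (.of_forall fun z => by simp [norm_torusMonomial])

lemma torusFourierCoeff_eq_zpow_mul {f : (Fin d → Circle) → ℂ}
    (hf : ∀ (w : Circle) z, f (fun j => w * z j) = w * f z) (α : Fin d → ℕ) (w : Circle) :
    ((w ^ (1 - ∑ j, α j : ℤ) : Circle) : ℂ) * torusFourierCoeff f α = torusFourierCoeff f α := by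
  have hw : ((w ^ (1 - ∑ j, α j : ℤ) : Circle) : ℂ) = w * conj (w : ℂ) ^ ∑ j, α j := by
    rw [← Circle.coe_inv_eq_conj, ← Circle.coe_pow, ← Circle.coe_mul, zpow_sub, zpow_one,
      zpow_natCast, inv_pow]
  set g := fun z => f z * conj (torusMonomial α z)
  calc ((w ^ (1 - ∑ j, α j : ℤ) : Circle) : ℂ) * torusFourierCoeff f α
      = ∫ z, g (fun j => w * z j) ∂muD d := by
        rw [torusFourierCoeff, ← integral_const_mul]
        refine integral_congr_ae (.of_forall fun z => ?_)
        simp only [g, hw, hf, torusMonomial_const_mul, map_mul, map_pow]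
        ring
    _ = torusFourierCoeff f α := integral_mul_left_eq_self g (fun _ => w)

lemma torusFourierCoeff_eq_zero_of_sum_ne_one {f : (Fin d → Circle) → ℂ}
    (hf : ∀ (w : Circle) z, f (fun j => w * z j) = w * f z) {α : Fin d → ℕ}
    (hα : ∑ j, α j ≠ 1) : torusFourierCoeff f α = 0 :=
  eq_zero_of_forall_circle_zpow_mul_eq (by omega) (torusFourierCoeff_eq_zpow_mul hf α)

lemma torusFourierCoeff_comp_perm {f : (Fin d → Circle) → ℂ} {σ : Equiv.Perm (Fin d)}
    (hf : ∀ z, f (z ∘ σ) = f z) (α : Fin d → ℕ) :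
    torusFourierCoeff f (α ∘ σ) = torusFourierCoeff f α := by
  simp only [torusFourierCoeff, muD]
  rw [← (measurePreserving_piCongrLeft (fun _ => muCircle) σ).integral_comp'
    (g := fun z => f z * conj (torusMonomial α z))]
  refine integral_congr_ae (.of_forall fun z => ?_)
  set F := MeasurableEquiv.piCongrLeft (fun _ : Fin d => Circle) σ
  have hF : ∀ j, F z (σ j) = z j :=
    MeasurableEquiv.piCongrLeft_apply_apply (β := fun _ => Circle) σ z
  dsimp only
  rw [← hf (F z), show F z ∘ σ = z from funext hF, torusMonomial, torusMonomial,
    ← Equiv.prod_comp σ fun i => (F z i : ℂ) ^ α i]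
  simp only [Function.comp_apply, hF]

/-- Swapping coordinates shows that the coefficients at the `e_j` agree, and they sum to
`∫ f · conj φ`. -/
lemma natCast_mul_torusFourierCoeff_single {f : (Fin d → Circle) → ℂ}
    (hf : Integrable f (muD d)) (hsymm : ∀ (σ : Equiv.Perm (Fin d)) z, f (z ∘ σ) = f z)
    (j : Fin d) :
    d * torusFourierCoeff f (Pi.single j 1) = ∫ z, f z * conj (phiD d z) ∂muD d := by
  have hcoeff : ∀ i, torusFourierCoeff f (Pi.single i 1) = torusFourierCoeff f (Pi.single j 1) :=
    fun i => by
      rw [← torusFourierCoeff_comp_perm (hsymm (Equiv.swap i j)), Pi.single_comp_equiv,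
        Equiv.symm_swap, Equiv.swap_apply_left]
  calc (d : ℂ) * torusFourierCoeff f (Pi.single j 1)
      = ∑ i, torusFourierCoeff f (Pi.single i 1) := by simp [hcoeff]
    _ = ∫ z, f z * conj (phiD d z) ∂muD d := by
      simp only [torusFourierCoeff]
      rw [← integral_finsetSum _ fun i _ => hf.mul_conj_torusMonomial _]
      simp only [torusMonomial_single, ← Finset.mul_sum, ← map_sum, phiD]

end TorusFourier

section Psi

variable {d : ℕ}

lemma continuous_phiD : Continuous (phiD d) := by
  unfold phiD; fun_prop

lemma norm_phiD_le (z : Fin d → Circle) : ‖phiD d z‖ ≤ d :=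
  (norm_sum_le _ _).trans_eq (by simp [Circle.norm_coe])

lemma phiD_const_mul (w : Circle) (z : Fin d → Circle) :
    phiD d (fun j => w * z j) = w * phiD d z := by
  simp [phiD, Finset.mul_sum]

lemma phiD_comp_perm (σ : Equiv.Perm (Fin d)) (z : Fin d → Circle) :
    phiD d (z ∘ σ) = phiD d z :=
  Equiv.sum_comp σ fun j => (z j : ℂ)

lemma phiNorm_nonneg (p : ℝ) (d : ℕ) : 0 ≤ phiNorm p d :=
  Real.rpow_nonneg (integral_nonneg fun _ => by positivity) _

lemma psiFn_const_mul (p : ℝ) (w : Circle) (z : Fin d → Circle) :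
    psiFn p d (fun j => w * z j) = w * psiFn p d z := by
  simp only [psiFn, phiD_const_mul, norm_mul, Circle.norm_coe, one_mul]
  ring

lemma psiFn_comp_perm (p : ℝ) (σ : Equiv.Perm (Fin d)) (z : Fin d → Circle) :
    psiFn p d (z ∘ σ) = psiFn p d z := by
  simp only [psiFn, phiD_comp_perm]

lemma measurable_psiFn (p : ℝ) : Measurable (psiFn p d) := by
  have := continuous_phiD (d := d) |>.measurable
  unfold psiFn; fun_prop

lemma norm_psiFn_le {p : ℝ} (hp : 1 ≤ p) (z : Fin d → Circle) :
    ‖psiFn p d z‖ ≤ d * phiNorm p d ^ (-p) * (d : ℝ) ^ (p - 1) := by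
  have hφ : ‖phiD d z‖ ^ (p - 2) * ‖phiD d z‖ ≤ (d : ℝ) ^ (p - 1) := by
    rcases eq_or_ne ‖phiD d z‖ 0 with h | h
    · rw [h, mul_zero]; positivity
    · rw [← Real.rpow_add_one h, show p - 2 + 1 = p - 1 by ring]
      exact Real.rpow_le_rpow (norm_nonneg _) (norm_phiD_le z) (by linarith)
  calc ‖psiFn p d z‖ = d * phiNorm p d ^ (-p) * (‖phiD d z‖ ^ (p - 2) * ‖phiD d z‖) := by
        simp only [psiFn, norm_mul, Complex.norm_real, Real.norm_eq_abs, Nat.abs_cast,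
          abs_of_nonneg (Real.rpow_nonneg (phiNorm_nonneg p d) _),
          abs_of_nonneg (Real.rpow_nonneg (norm_nonneg _) _)]
        ring
    _ ≤ d * phiNorm p d ^ (-p) * (d : ℝ) ^ (p - 1) :=
        mul_le_mul_of_nonneg_left hφ (by have := phiNorm_nonneg p d; positivity)

lemma memLp_psiFn {p : ℝ} (hp : 1 ≤ p) (q : ℝ≥0∞) : MemLp (psiFn p d) q (muD d) :=
  .of_bound (measurable_psiFn p).aestronglyMeasurable _ (.of_forall (norm_psiFn_le hp))

lemma integral_norm_phiD_rpow_pos {p : ℝ} (hp : 0 < p) (hd : d ≠ 0) :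
    0 < ∫ z, ‖phiD d z‖ ^ p ∂muD d := by
  have hφ1 : phiD d (fun _ => 1) = d := by simp [phiD]
  refine (continuous_phiD.norm.rpow_const fun _ => .inr hp.le)
    |>.integral_pos_of_hasCompactSupport_nonneg_nonzero (x := fun _ => 1)
      (HasCompactSupport.of_compactSpace _) (fun _ => by positivity) ?_
  rw [hφ1, Complex.norm_natCast]
  exact (Real.rpow_pos_of_pos (Nat.cast_pos.mpr (Nat.pos_of_ne_zero hd)) _).ne'

lemma psiFn_mul_conj_phiD {p : ℝ} (hp : p ≠ 0) (z : Fin d → Circle) :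
    psiFn p d z * conj (phiD d z) = ((d * phiNorm p d ^ (-p) * ‖phiD d z‖ ^ p : ℝ) : ℂ) := by
  rcases eq_or_ne (phiD d z) 0 with h | h
  · simp [psiFn, h, Real.zero_rpow hp]
  · have hr : ‖phiD d z‖ ^ (p - 2) * ‖phiD d z‖ ^ 2 = ‖phiD d z‖ ^ p := by
      rw [← Real.rpow_natCast, ← Real.rpow_add (norm_pos_iff.mpr h)]
      norm_num
    rw [psiFn, mul_assoc, Complex.mul_conj, Complex.normSq_eq_norm_sq, ← hr]
    push_cast
    ring

lemma integral_psiFn_mul_conj_phiD {p : ℝ} (hp : 0 < p) (hd : d ≠ 0) :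
    ∫ z, psiFn p d z * conj (phiD d z) ∂muD d = d := by
  have hpos := integral_norm_phiD_rpow_pos hp hd
  have hnorm : phiNorm p d ^ p = ∫ z, ‖phiD d z‖ ^ p ∂muD d := by
    rw [phiNorm, ← Real.rpow_mul hpos.le, one_div_mul_cancel hp.ne', Real.rpow_one]
  simp_rw [psiFn_mul_conj_phiD hp.ne']
  rw [integral_complex_ofReal, integral_const_mul, Real.rpow_neg (phiNorm_nonneg p d),
    hnorm, mul_assoc, inv_mul_cancel₀ hpos.ne', mul_one, Complex.ofReal_natCast]

end Psi

open scoped Classical in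
theorem psi_memLq_and_fourier_general (p : ℝ) (hp : 1 ≤ p) (d : ℕ) (hd : 1 ≤ d) (q : ℝ≥0∞) :
    MemLp (psiFn p d) q (muD d) ∧
      ∀ α : Fin d → ℕ,
        ∫ z : Fin d → Circle, psiFn p d z * (starRingEnd ℂ) (∏ j, (z j : ℂ) ^ α j) ∂muD d
          = if ∃ j : Fin d, α = Pi.single j 1 then 1 else 0 := by
  refine ⟨memLp_psiFn hp q, fun α => ?_⟩
  change torusFourierCoeff (psiFn p d) α = _
  split_ifs with hα
  · obtain ⟨j, rfl⟩ := hα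
    have hd0 : (d : ℂ) ≠ 0 := Nat.cast_ne_zero.mpr (by omega)
    have hcoeff := natCast_mul_torusFourierCoeff_single
      (memLp_one_iff_integrable.mp (memLp_psiFn hp 1)) (psiFn_comp_perm p) j
    rw [integral_psiFn_mul_conj_phiD (by linarith) (by omega)] at hcoeff
    exact mul_left_cancel₀ hd0 (hcoeff.trans (mul_one _).symm)
  · exact torusFourierCoeff_eq_zero_of_sum_ne_one (psiFn_const_mul p)
      (mt exists_eq_pi_single_of_sum_eq_one hα)

open scoped Classical in
/-- `ψ ∈ L^q(𝕋^d)` and the Riesz projection of `ψ` equals `φ`, i.e. the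
analytic Fourier coefficients of `ψ` are `1` at the unit multi-indices `e_j` and `0` at
every other `α ∈ ℕ₀^d`. -/
theorem psi_memLq_and_fourier (p : ℝ) (hp : 1 ≤ p) (d : ℕ) (hd : 1 ≤ d) (q : ℝ≥0∞)
    (hq : (ENNReal.ofReal p)⁻¹ + q⁻¹ = 1) :
    MemLp (psiFn p d) q (muD d) ∧
      ∀ α : Fin d → ℕ,
        ∫ z : Fin d → Circle, psiFn p d z * (starRingEnd ℂ) (∏ j, (z j : ℂ) ^ α j) ∂muD d
          = if ∃ j : Fin d, α = Pi.single j 1 then 1 else 0 :=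
  psi_memLq_and_fourier_general p hp d hd q
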